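/- Let α : X → Y be a coarse map between metric spaces and let r be a large-scale proximity relation on Y. Define a relation r' on subsets of X by: A r' B iff α(A) r α(B). Then r' is a large-scale proximity relation on X. -/

import Mathlib

open Topology

/-- A subset `E ⊆ X × X` is an entourage if `sup_{(x,y) ∈ E} d(x,y) < ∞`. -/
def IsEntourage {X : Type*} [MetricSpace X] (E : Set (X × X)) : Prop :=
  ∃ C : ℝ, ∀ p ∈ E, dist p.1 p.2 ≤ C

/-- `E[S] = {x | ∃ y ∈ S, (x,y) ∈ E}`. -/
def EImage {X : Type*} (E : Set (X × X)) (S : Set X) : Set X :=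
  {x | ∃ y ∈ S, (x, y) ∈ E}

/-- Subsets `A, B` are close (`A ≍ B`): there are `R ≥ 0` and a sequence
`(aₙ, bₙ) ∈ A × B` with `d(aₙ, bₙ) ≤ R` and `{aₙ}` unbounded. -/
def Close {X : Type*} [MetricSpace X] (A B : Set X) : Prop :=
  ∃ R : ℝ, 0 ≤ R ∧ ∃ a b : ℕ → X, (∀ n, a n ∈ A) ∧ (∀ n, b n ∈ B) ∧
    (∀ n, dist (a n) (b n) ≤ R) ∧ ¬ Bornology.IsBounded (Set.range a)

/-- `A ≍_f B` iff there do not exist `A' ⊇ A`, `B' ⊇ B` with `A' ∪ B' = X` and `¬(A' ≍ B')`. -/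
def CloseF {X : Type*} [MetricSpace X] (A B : Set X) : Prop :=
  ¬ ∃ A' B' : Set X, A ⊆ A' ∧ B ⊆ B' ∧ A' ∪ B' = Set.univ ∧ ¬ Close A' B'

/-- A large-scale proximity relation. -/
structure IsLSP {X : Type*} [MetricSpace X] (r : Set X → Set X → Prop) : Prop where
  not_self_iff_bounded : ∀ B : Set X, (¬ r B B) ↔ Bornology.IsBounded B
  symm : ∀ A B : Set X, r A B → r B A
  entourage_invariant : ∀ (A A' : Set X) (E : Set (X × X)), IsEntourage E →
    A' ⊆ EImage E A → A ⊆ EImage E A' → ∀ B : Set X, r A B → r A' B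
  union_iff : ∀ A B C : Set X, r (A ∪ B) C ↔ (r A C ∨ r B C)
  separation : ∀ A B : Set X, ¬ r A B →
    ∃ C D : Set X, C ∪ D = Set.univ ∧ ¬ r C A ∧ ¬ r D B

/-- An `r`-ultrafilter on `X`. -/
def IsRUltrafilter {X : Type*} (r : Set X → Set X → Prop) (F : Set (Set X)) : Prop :=
  (∀ A ∈ F, ∀ B ∈ F, r A B) ∧ (∀ A B : Set X, A ∪ B ∈ F → A ∈ F ∨ B ∈ F) ∧ Set.univ ∈ F

/-- A compactification `i : X → X̄` is coarse if for every entourage `E`, the closure of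
`(i × i)(E)` meets `(∂X × X̄) ∪ (X̄ × ∂X)` only inside the diagonal over `∂X = X̄ ∖ i(X)`. -/
def IsCoarseCompactification {X Xb : Type*} [MetricSpace X] [TopologicalSpace Xb]
    (i : X → Xb) : Prop :=
  ∀ E : Set (X × X), IsEntourage E →
    closure ((fun p : X × X => (i p.1, i p.2)) '' E) ∩
      (((Set.range i)ᶜ ×ˢ (Set.univ : Set Xb)) ∪ ((Set.univ : Set Xb) ×ˢ (Set.range i)ᶜ)) ⊆
      {q : Xb × Xb | q.1 = q.2 ∧ q.1 ∈ (Set.range i)ᶜ}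

/-- A Higson function: bounded, continuous, and for every entourage `E` and `ε > 0`
there is a bounded set `B` outside of which the variation on `E` is `< ε`. -/
def IsHigson {X : Type*} [MetricSpace X] (φ : X → ℝ) : Prop :=
  Continuous φ ∧ (∃ C : ℝ, ∀ x, |φ x| ≤ C) ∧
  ∀ E : Set (X × X), IsEntourage E → ∀ ε > (0:ℝ), ∃ B : Set X, Bornology.IsBounded B ∧
    ∀ p ∈ E, (p.1 ∉ B ∨ p.2 ∉ B) → |φ p.1 - φ p.2| < ε

/-- A coarse map: coarsely uniform and coarsely proper. -/
def IsCoarseMap {X Y : Type*} [MetricSpace X] [MetricSpace Y] (f : X → Y) : Prop :=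
  (∀ E : Set (X × X), IsEntourage E →
    IsEntourage ((fun p : X × X => (f p.1, f p.2)) '' E)) ∧
  (∀ S : Set Y, Bornology.IsBounded S → Bornology.IsBounded (f ⁻¹' S))

/-- The Gromov product `(x|y)_w`. -/
noncomputable def gromovProd {X : Type*} [MetricSpace X] (w x y : X) : ℝ :=
  (dist x w + dist y w - dist x y) / 2

/-- `X` is a geodesic metric space. -/
def IsGeodesicSpace (X : Type*) [MetricSpace X] : Prop :=
  ∀ x y : X, ∃ γ : ℝ → X, γ 0 = x ∧ γ (dist x y) = y ∧
    ∀ s ∈ Set.Icc (0:ℝ) (dist x y), ∀ t ∈ Set.Icc (0:ℝ) (dist x y),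
      dist (γ s) (γ t) = |s - t|

open Bornology

section Coarse

variable {X Y : Type*} [MetricSpace X] [MetricSpace Y] {f : X → Y}

def IsCoarselyUniform (f : X → Y) : Prop :=
  ∀ E : Set (X × X), IsEntourage E → IsEntourage ((fun p : X × X => (f p.1, f p.2)) '' E)

theorem IsCoarseMap.isCoarselyUniform (hf : IsCoarseMap f) : IsCoarselyUniform f := hf.1

-- `B ×ˢ B` is an entourage whose image is `f '' B ×ˢ f '' B`.
theorem IsCoarselyUniform.isBounded_image (hf : IsCoarselyUniform f) {B : Set X}
    (hB : IsBounded B) : IsBounded (f '' B) := by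
  obtain ⟨C, hC⟩ := Metric.isBounded_iff.mp hB
  obtain ⟨D, hD⟩ := hf (B ×ˢ B) ⟨C, fun p hp => hC hp.1 hp.2⟩
  refine Metric.isBounded_iff.mpr ⟨D, ?_⟩
  rintro _ ⟨x, hx, rfl⟩ _ ⟨y, hy, rfl⟩
  exact hD (f x, f y) ⟨(x, y), ⟨hx, hy⟩, rfl⟩

theorem IsCoarseMap.isBounded_of_isBounded_image (hf : IsCoarseMap f) {B : Set X}
    (hB : IsBounded (f '' B)) : IsBounded B :=
  (hf.2 _ hB).subset (Set.subset_preimage_image f B)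

end Coarse

theorem image_subset_eImage_image {X Y : Type*} (f : X → Y) {E : Set (X × X)}
    {A A' : Set X} (h : A' ⊆ EImage E A) :
    f '' A' ⊆ EImage ((fun p : X × X => (f p.1, f p.2)) '' E) (f '' A) := by
  rintro _ ⟨x, hx, rfl⟩
  obtain ⟨y, hy, hxy⟩ := h hx
  exact ⟨f y, ⟨y, hy, rfl⟩, ⟨(x, y), hxy, rfl⟩⟩

theorem IsLSP.mono_left {Y : Type*} [MetricSpace Y] {r : Set Y → Set Y → Prop} (hr : IsLSP r)
    {A A' B : Set Y} (h : r A B) (hAA' : A ⊆ A') : r A' B := by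
  simpa only [Set.union_eq_self_of_subset_left hAA'] using (hr.union_iff A A' B).mpr (Or.inl h)

/-- pulling back a large-scale proximity relation along a coarse map
yields a large-scale proximity relation. -/
theorem lsp_pullback_coarseMap {X Y : Type*} [MetricSpace X] [MetricSpace Y]
    (α : X → Y) (hα : IsCoarseMap α)
    (r : Set Y → Set Y → Prop) (hr : IsLSP r) :
    IsLSP (fun A B : Set X => r (α '' A) (α '' B)) where
  not_self_iff_bounded B := by
    rw [hr.not_self_iff_bounded]
    exact ⟨hα.isBounded_of_isBounded_image, hα.isCoarselyUniform.isBounded_image⟩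
  symm A B := hr.symm _ _
  entourage_invariant A A' E hE hA' hA B :=
    hr.entourage_invariant _ _ _ (hα.isCoarselyUniform E hE)
      (image_subset_eImage_image α hA') (image_subset_eImage_image α hA) _
  union_iff A B C := by
    simp only [Set.image_union]
    exact hr.union_iff _ _ _
  separation A B h := by
    obtain ⟨C, D, hCD, hCA, hDB⟩ := hr.separation _ _ h
    refine ⟨α ⁻¹' C, α ⁻¹' D, ?_, ?_, ?_⟩
    · rw [← Set.preimage_union, hCD, Set.preimage_univ]
    · exact fun hC => hCA (hr.mono_left hC (Set.image_preimage_subset α C))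
    · exact fun hD => hDB (hr.mono_left hD (Set.image_preimage_subset α D))
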